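/- For every n-qubit mixed state ρ and every x ∈ 𝔽₂^{2n}, the symplectic Fourier coefficient p̂_ρ(x) satisfies 0 ≤ p̂_ρ(x) ≤ 4^{-n}. -/

import Mathlib

open scoped BigOperators ComplexOrder

/-- The phase space `𝔽₂^{2n}`, written as pairs `(a, b)` with `a, b ∈ 𝔽₂ⁿ`. -/
abbrev PhaseSpace (n : ℕ) := (Fin n → ZMod 2) × (Fin n → ZMod 2)

/-- The symplectic product `[x, y] = a·d + b·c` for `x = (a,b)`, `y = (c,d)`. -/
def sympl {n : ℕ} (x y : PhaseSpace n) : ZMod 2 :=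
  ∑ i, x.1 i * y.2 i + ∑ i, x.2 i * y.1 i

/-- The symplectic Fourier transform `f̂(a) = 4^{-n} ∑_x (-1)^{[a,x]} f(x)`. -/
noncomputable def sft {n : ℕ} (f : PhaseSpace n → ℝ) (a : PhaseSpace n) : ℝ :=
  (1 / 4 ^ n) * ∑ x, (-1 : ℝ) ^ (sympl a x).val * f x

/-- The symplectic complement of a set `S ⊆ 𝔽₂^{2n}`. -/
def symplComplement {n : ℕ} (S : Set (PhaseSpace n)) : Set (PhaseSpace n) :=
  {x | ∀ a ∈ S, sympl x a = 0}

/-- The Weyl operator `W_x = i^{a·b} X^a Z^b` for `x = (a,b)`, as a `2^n × 2^n` matrix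
indexed by `𝔽₂ⁿ`: `(W_x)_{k,j} = i^{a·b} (-1)^{b·j} [k = j + a]`. -/
noncomputable def Weyl {n : ℕ} (x : PhaseSpace n) :
    Matrix (Fin n → ZMod 2) (Fin n → ZMod 2) ℂ :=
  fun k j => Complex.I ^ (∑ i, (x.1 i).val * (x.2 i).val) *
    (if k = j + x.1 then (-1 : ℂ) ^ (∑ i, (x.2 i).val * (j i).val) else 0)

/-- `p_H(x) = 2^{-n} tr(W_x H)²` (the trace is real for Hermitian `H`). -/
noncomputable def pFun {n : ℕ} (H : Matrix (Fin n → ZMod 2) (Fin n → ZMod 2) ℂ)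
    (x : PhaseSpace n) : ℝ :=
  ((Weyl x * H).trace.re) ^ 2 / 2 ^ n

/-!
Writing `tr(W_y ρ)` in the computational basis, the `Z`-part `d` of `y = (c, d)` enters
`(-1)^{[x,y]} tr(W_y ρ)²` only through a character of `𝔽₂ⁿ`; summing it out leaves
`∑_y (-1)^{[x,y]} tr(W_y ρ)² = 2ⁿ tr(W_x ρ W_x ρ)`, so `p̂_ρ(x) = 4^{-n} tr(σ ρ)` for the state
`σ = W_x ρ W_x`. For positive semidefinite `A = XᴴX` and `B = YᴴY` one has `tr(AB) = ‖XYᴴ‖_F²`,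
which lies between `0` and `‖X‖_F² ‖Y‖_F² = tr A · tr B`.
-/

namespace Matrix

section FrobeniusTrace

open scoped Matrix.Norms.Frobenius MatrixOrder

variable {m n 𝕜 : Type*} [Fintype m] [Fintype n] [RCLike 𝕜]

lemma trace_conjTranspose_mul_self_eq_frobenius_norm_sq (A : Matrix m n 𝕜) :
    (Aᴴ * A).trace = ((‖A‖ ^ 2 : ℝ) : 𝕜) := by
  rw [frobenius_norm_def, ← Real.sqrt_eq_rpow, Real.sq_sqrt (by positivity), trace,
    Finset.sum_comm]
  push_cast
  refine Finset.sum_congr rfl fun j _ => ?_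
  simp [mul_apply, RCLike.conj_mul]

lemma PosSemidef.exists_eq_conjTranspose_mul_self {A : Matrix n n 𝕜} (hA : A.PosSemidef) :
    ∃ X : Matrix n n 𝕜, A = Xᴴ * X := by
  classical exact CStarAlgebra.nonneg_iff_eq_star_mul_self.mp hA.nonneg

lemma trace_conjTranspose_mul_self_mul_conjTranspose_mul_self (X Y : Matrix n n 𝕜) :
    (Xᴴ * X * (Yᴴ * Y)).trace = ((X * Yᴴ)ᴴ * (X * Yᴴ)).trace := by
  rw [conjTranspose_mul, conjTranspose_conjTranspose, ← Matrix.mul_assoc, trace_mul_cycle,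
    Matrix.mul_assoc, Matrix.mul_assoc, Matrix.mul_assoc]

theorem PosSemidef.trace_mul_nonneg {A B : Matrix n n 𝕜} (hA : A.PosSemidef)
    (hB : B.PosSemidef) : 0 ≤ (A * B).trace := by
  obtain ⟨X, rfl⟩ := hA.exists_eq_conjTranspose_mul_self
  obtain ⟨Y, rfl⟩ := hB.exists_eq_conjTranspose_mul_self
  rw [trace_conjTranspose_mul_self_mul_conjTranspose_mul_self,
    trace_conjTranspose_mul_self_eq_frobenius_norm_sq, RCLike.ofReal_nonneg]
  positivity

theorem PosSemidef.trace_mul_le {A B : Matrix n n 𝕜} (hA : A.PosSemidef)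
    (hB : B.PosSemidef) : (A * B).trace ≤ A.trace * B.trace := by
  obtain ⟨X, rfl⟩ := hA.exists_eq_conjTranspose_mul_self
  obtain ⟨Y, rfl⟩ := hB.exists_eq_conjTranspose_mul_self
  simp only [trace_conjTranspose_mul_self_mul_conjTranspose_mul_self,
    trace_conjTranspose_mul_self_eq_frobenius_norm_sq, ← RCLike.ofReal_mul, RCLike.ofReal_le_ofReal]
  rw [← mul_pow, ← frobenius_norm_conjTranspose Y]
  gcongr
  exact frobenius_norm_mul X Yᴴ

end FrobeniusTrace
end Matrix

lemma neg_one_pow_eq_of_natCast_eq {R : Type*} [Monoid R] [HasDistribNeg R] {m k : ℕ}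
    (h : (m : ZMod 2) = k) : (-1 : R) ^ m = (-1) ^ k :=
  neg_one_pow_congr <| by rw [← ZMod.natCast_eq_zero_iff_even, h, ZMod.natCast_eq_zero_iff_even]

namespace Pi

variable {ι R : Type*} [Ring R] [CharP R 2]

lemma add_self_eq_zero_of_charTwo (v : ι → R) : v + v = 0 :=
  funext fun i => CharTwo.add_self_eq_zero (v i)

lemma add_add_cancel_right_of_charTwo (u v : ι → R) : u + v + v = u := by
  rw [add_assoc, add_self_eq_zero_of_charTwo, add_zero]

lemma eq_add_comm_of_charTwo {u v w : ι → R} : u = v + w ↔ v = u + w := by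
  constructor <;> rintro rfl <;> exact (add_add_cancel_right_of_charTwo _ _).symm

lemma add_eq_zero_iff_eq_of_charTwo {u v : ι → R} : u + v = 0 ↔ u = v := by
  rw [← add_self_eq_zero_of_charTwo v, add_left_inj]

end Pi

section Weyl

open Matrix

variable {n : ℕ}

noncomputable def signChar (u v : Fin n → ZMod 2) : ℂ :=
  (-1) ^ ∑ i, (u i).val * (v i).val

lemma signChar_comm (u v : Fin n → ZMod 2) : signChar u v = signChar v u := by
  simp only [signChar, Nat.mul_comm]

lemma signChar_add_right (u v w : Fin n → ZMod 2) :
    signChar u (v + w) = signChar u v * signChar u w := by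
  rw [signChar, signChar, signChar, ← pow_add]
  apply neg_one_pow_eq_of_natCast_eq
  simp [Finset.sum_add_distrib, mul_add]

lemma signChar_mul_self (u v : Fin n → ZMod 2) : signChar u v * signChar u v = 1 := by
  rw [← signChar_add_right, Pi.add_self_eq_zero_of_charTwo]
  simp [signChar]

lemma star_signChar (u v : Fin n → ZMod 2) : star (signChar u v) = signChar u v := by
  simp [signChar]

lemma sum_signChar (u : Fin n → ZMod 2) :
    ∑ v, signChar u v = if u = 0 then 2 ^ n else 0 := by
  have hcoord (a : ZMod 2) : ∑ t : ZMod 2, (-1 : ℂ) ^ (a.val * t.val) = if a = 0 then 2 else 0 := by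
    have huniv : (Finset.univ : Finset (ZMod 2)) = {0, 1} := rfl
    obtain rfl | rfl : a = 0 ∨ a = 1 := by decide +revert
    · simp [huniv]
    · simp [huniv, ZMod.val_one]
  -- `signChar u` is a product over the coordinates, so its sum is `∏ᵢ (1 + (-1)^{uᵢ})`.
  simp_rw [signChar, ← Finset.prod_pow_eq_pow_sum]
  rw [← Fintype.prod_sum (fun i (t : ZMod 2) => (-1 : ℂ) ^ ((u i).val * t.val))]
  simp_rw [hcoord, Fintype.prod_ite_zero, Finset.prod_const, Finset.card_univ, Fintype.card_fin,
    ← funext_iff]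
  rfl

lemma sum_signChar_left (w : Fin n → ZMod 2) :
    ∑ v, signChar v w = if w = 0 then 2 ^ n else 0 := by
  simp only [signChar_comm _ w, sum_signChar]

lemma sign_sympl (x y : PhaseSpace n) :
    (-1 : ℂ) ^ (sympl x y).val = signChar x.1 y.2 * signChar x.2 y.1 := by
  rw [signChar, signChar, ← pow_add]
  apply neg_one_pow_eq_of_natCast_eq
  simp [sympl]

noncomputable def weylPhase (x : PhaseSpace n) : ℂ :=
  Complex.I ^ ∑ i, (x.1 i).val * (x.2 i).val

lemma weylPhase_mul_self (x : PhaseSpace n) : weylPhase x * weylPhase x = signChar x.1 x.2 := by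
  rw [weylPhase, signChar, ← mul_pow, Complex.I_mul_I]

lemma weylPhase_mul_self_mul_signChar (x : PhaseSpace n) :
    weylPhase x * weylPhase x * signChar x.2 x.1 = 1 := by
  rw [weylPhase_mul_self, signChar_comm x.2, signChar_mul_self]

lemma star_weylPhase (x : PhaseSpace n) :
    star (weylPhase x) = weylPhase x * signChar x.1 x.2 := by
  rw [weylPhase, signChar, ← mul_pow, Complex.star_def, map_pow, Complex.conj_I]
  ring_nf

lemma weyl_apply (x : PhaseSpace n) (k j : Fin n → ZMod 2) :
    Weyl x k j = weylPhase x * if k = j + x.1 then signChar x.2 j else 0 := rfl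

lemma weyl_mul_apply (x : PhaseSpace n) (M : Matrix (Fin n → ZMod 2) (Fin n → ZMod 2) ℂ)
    (k j : Fin n → ZMod 2) :
    (Weyl x * M) k j = weylPhase x * signChar x.2 (k + x.1) * M (k + x.1) j := by
  simp only [mul_apply, weyl_apply, Pi.eq_add_comm_of_charTwo (u := k), mul_ite, ite_mul,
    mul_zero, zero_mul, Finset.sum_ite_eq', Finset.mem_univ, if_true, mul_assoc]

lemma trace_weyl_mul (x : PhaseSpace n) (M : Matrix (Fin n → ZMod 2) (Fin n → ZMod 2) ℂ) :
    (Weyl x * M).trace = weylPhase x * ∑ j, signChar x.2 j * M j (j + x.1) := by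
  rw [trace, ← Equiv.sum_comp (Equiv.addRight x.1), Finset.mul_sum]
  refine Finset.sum_congr rfl fun j _ => ?_
  simp only [Equiv.coe_addRight, diag_apply, weyl_mul_apply,
    Pi.add_add_cancel_right_of_charTwo, mul_assoc]

lemma conjTranspose_weyl (x : PhaseSpace n) : (Weyl x)ᴴ = Weyl x := by
  ext k j
  rw [conjTranspose_apply, weyl_apply, weyl_apply]
  by_cases h : k = j + x.1
  · rw [if_pos (Pi.eq_add_comm_of_charTwo.mp h), if_pos h, star_mul', star_weylPhase,
      star_signChar, h, signChar_add_right, signChar_comm x.1]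
    linear_combination (weylPhase x * signChar x.2 j) * signChar_mul_self x.2 x.1
  · rw [if_neg (mt Pi.eq_add_comm_of_charTwo.mpr h), if_neg h, mul_zero, star_zero]

lemma weyl_mul_self (x : PhaseSpace n) : Weyl x * Weyl x = 1 := by
  ext k j
  rw [weyl_mul_apply, weyl_apply, one_apply]
  simp only [add_left_inj]
  split_ifs with h
  · rw [h, signChar_add_right]
    linear_combination signChar x.2 j ^ 2 * weylPhase_mul_self_mul_signChar x
      + signChar_mul_self x.2 j
  · simp

variable (x : PhaseSpace n) (A B : Matrix (Fin n → ZMod 2) (Fin n → ZMod 2) ℂ)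

lemma trace_weyl_mul_weyl_mul :
    (Weyl x * A * (Weyl x * B)).trace =
      ∑ j, ∑ c, signChar x.2 c * A j (j + c) * B (j + c + x.1) (j + x.1) := by
  rw [trace, ← Equiv.sum_comp (Equiv.addRight x.1)]
  refine Finset.sum_congr rfl fun j _ => ?_
  rw [diag_apply, mul_apply, ← Equiv.sum_comp (Equiv.addLeft j)]
  refine Finset.sum_congr rfl fun c _ => ?_
  simp only [Equiv.coe_addRight, Equiv.coe_addLeft, weyl_mul_apply,
    Pi.add_add_cancel_right_of_charTwo, signChar_add_right]
  linear_combination (A j (j + c) * B (j + c + x.1) (j + x.1) * signChar x.2 c) *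
    (signChar x.2 j ^ 2 * weylPhase_mul_self_mul_signChar x + signChar_mul_self x.2 j)

lemma sign_sympl_mul_trace_weyl_mul_mul_trace (c d : Fin n → ZMod 2) :
    (-1 : ℂ) ^ (sympl x (c, d)).val * ((Weyl (c, d) * A).trace * (Weyl (c, d) * B).trace) =
      ∑ j, ∑ l, signChar x.2 c * A j (j + c) * B l (l + c) * signChar d (j + c + x.1 + l) := by
  rw [trace_weyl_mul, trace_weyl_mul, mul_mul_mul_comm, weylPhase_mul_self, Finset.sum_mul_sum,
    sign_sympl]
  simp_rw [Finset.mul_sum]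
  refine Finset.sum_congr rfl fun j _ => Finset.sum_congr rfl fun l _ => ?_
  simp only [signChar_add_right, signChar_comm x.1 d, signChar_comm c d]
  ring

theorem sum_sign_sympl_mul_trace_weyl_mul_mul_trace :
    ∑ y, (-1 : ℂ) ^ (sympl x y).val * ((Weyl y * A).trace * (Weyl y * B).trace) =
      2 ^ n * (Weyl x * A * (Weyl x * B)).trace := by
  simp_rw [Fintype.sum_prod_type, sign_sympl_mul_trace_weyl_mul_mul_trace]
  conv_rhs => rw [trace_weyl_mul_weyl_mul, Finset.sum_comm, Finset.mul_sum]
  refine Finset.sum_congr rfl fun c _ => ?_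
  rw [Finset.sum_comm, Finset.mul_sum]
  refine Finset.sum_congr rfl fun j _ => ?_
  rw [Finset.sum_comm]
  simp_rw [← Finset.mul_sum, sum_signChar_left, Pi.add_eq_zero_iff_eq_of_charTwo, mul_ite,
    mul_zero, Finset.sum_ite_eq, Finset.mem_univ, if_true, add_right_comm _ x.1 c,
    Pi.add_add_cancel_right_of_charTwo]
  ring

lemma star_trace_weyl_mul {M : Matrix (Fin n → ZMod 2) (Fin n → ZMod 2) ℂ}
    (hM : M.IsHermitian) :
    star (Weyl x * M).trace = (Weyl x * M).trace := by
  rw [← trace_conjTranspose, conjTranspose_mul, hM.eq, conjTranspose_weyl, trace_mul_comm]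

theorem ofReal_sft_pFun {ρ : Matrix (Fin n → ZMod 2) (Fin n → ZMod 2) ℂ} (hρ : ρ.IsHermitian) :
    (sft (pFun ρ) x : ℂ) = (Weyl x * ρ * (Weyl x * ρ)).trace / 4 ^ n := by
  have hreal (y : PhaseSpace n) : ((Weyl y * ρ).trace.re : ℂ) = (Weyl y * ρ).trace :=
    Complex.conj_eq_iff_re.mp (star_trace_weyl_mul y hρ)
  simp only [sft, pFun]
  push_cast
  simp_rw [hreal, sq, mul_div_assoc', ← Finset.sum_div,
    sum_sign_sympl_mul_trace_weyl_mul_mul_trace]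
  field_simp

end Weyl

/-- For every n-qubit mixed state ρ and every x ∈ 𝔽₂^{2n},
0 ≤ p̂_ρ(x) ≤ 4^{-n}. -/
theorem sft_pFun_nonneg_le {n : ℕ} (ρ : Matrix (Fin n → ZMod 2) (Fin n → ZMod 2) ℂ)
    (hρ : ρ.PosSemidef) (hτ : ρ.trace = 1) (x : PhaseSpace n) :
    0 ≤ sft (pFun ρ) x ∧ sft (pFun ρ) x ≤ 1 / 4 ^ n := by
  set σ := Weyl x * ρ * Weyl x
  have hσ : σ.PosSemidef := by
    simpa only [conjTranspose_weyl] using hρ.mul_mul_conjTranspose_same (Weyl x)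
  have hσ_trace : σ.trace = 1 := by rw [Matrix.trace_mul_cycle, weyl_mul_self, one_mul, hτ]
  have hsft : (sft (pFun ρ) x : ℂ) = (σ * ρ).trace / 4 ^ n := by
    rw [ofReal_sft_pFun x hρ.isHermitian, ← Matrix.mul_assoc]
  have h4 : (0 : ℂ) ≤ 4 ^ n := pow_nonneg (by norm_num) n
  constructor
  · rw [← Complex.zero_le_real, hsft]
    exact div_nonneg (hσ.trace_mul_nonneg hρ) h4
  · rw [← Complex.real_le_real, hsft]
    calc (σ * ρ).trace / 4 ^ n ≤ σ.trace * ρ.trace / 4 ^ n :=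
          div_le_div_of_nonneg_right (hσ.trace_mul_le hρ) h4
      _ = _ := by rw [hσ_trace, hτ]; push_cast; ring
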